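/- arXiv:1511.00228 — 5 statements merged into one kernel-verified Lean document; each statement's English description precedes it below -/
import Mathlib

section
/- Let G be an r-partite graph with parts V_i = {x_{1i}, ..., x_{ni}} (1 ≤ i ≤ r) such that each row {x_{j1}, ..., x_{jr}} is a clique. Then G is unmixed if and only if for every 1 ≤ q ≤ n, whenever vertices x_{k_1 s_1}, ..., x_{k_r s_r} satisfy x_{k_i s_i} adjacent to x_{qi} for all i, the set {x_{k_1 s_1}, ..., x_{k_r s_r}} is not independent (i.e., contains an edge). -/
open Finset

variable {V : Type*}

/-- `C` is a vertex cover of `G`: every edge has an endpoint in `C`. -/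
def IsVertexCover (G : SimpleGraph V) (C : Finset V) : Prop :=
  ∀ v w, G.Adj v w → v ∈ C ∨ w ∈ C

/-- `C` is a minimal vertex cover of `G`. -/
def IsMinimalVertexCover (G : SimpleGraph V) (C : Finset V) : Prop :=
  IsVertexCover G C ∧ ∀ D : Finset V, D ⊂ C → ¬ IsVertexCover G D

/-- `S` is an independent set of `G`. -/
def IsIndepSet (G : SimpleGraph V) (S : Finset V) : Prop :=
  ∀ v ∈ S, ∀ w ∈ S, ¬ G.Adj v w

/-- `S` is a maximal independent set of `G`. -/
def IsMaxIndepSet (G : SimpleGraph V) (S : Finset V) : Prop :=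
  IsIndepSet G S ∧ ∀ T : Finset V, S ⊂ T → ¬ IsIndepSet G T

/-- `G` is unmixed: all minimal vertex covers have the same cardinality. -/
def Unmixed (G : SimpleGraph V) : Prop :=
  ∀ C D : Finset V, IsMinimalVertexCover G C → IsMinimalVertexCover G D →
    C.card = D.card

/-- `G` is well-covered: all maximal independent sets have the same cardinality. -/
def WellCovered (G : SimpleGraph V) : Prop :=
  ∀ S T : Finset V, IsMaxIndepSet G S → IsMaxIndepSet G T → S.card = T.card


section Aux
variable [Fintype V] [DecidableEq V]

lemma indep_compl_iff_cover (G : SimpleGraph V) (C : Finset V) :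
    IsIndepSet G Cᶜ ↔ IsVertexCover G C := by
  constructor
  · intro h v w hvw
    by_contra hc
    push_neg at hc
    exact h v (by simp [hc.1]) w (by simp [hc.2]) hvw
  · intro h v hv w hw hvw
    simp only [Finset.mem_compl] at hv hw
    rcases h v w hvw with h1 | h1 <;> [exact hv h1; exact hw h1]

lemma minCover_iff_maxIndep_compl (G : SimpleGraph V) (C : Finset V) :
    IsMinimalVertexCover G C ↔ IsMaxIndepSet G Cᶜ := by
  constructor
  · rintro ⟨hcov, hmin⟩
    refine ⟨(indep_compl_iff_cover G C).2 hcov, ?_⟩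
    intro T hT hTindep
    have h1 : Tᶜ ⊂ C := by
      have := compl_lt_compl_iff_lt.2 (show Cᶜ < T from hT)
      simpa using this
    exact hmin Tᶜ h1 ((indep_compl_iff_cover G Tᶜ).1 (by simpa using hTindep))
  · rintro ⟨hind, hmax⟩
    refine ⟨(indep_compl_iff_cover G C).1 hind, ?_⟩
    intro D hD hDcov
    have h1 : Cᶜ ⊂ Dᶜ := compl_lt_compl_iff_lt.2 hD
    exact hmax Dᶜ h1 ((indep_compl_iff_cover G D).2 hDcov)

lemma unmixed_iff_wellCovered (G : SimpleGraph V) :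
    Unmixed G ↔ WellCovered G := by
  constructor
  · intro h S T hS hT
    have hS' : IsMinimalVertexCover G Sᶜ := by
      rw [minCover_iff_maxIndep_compl, compl_compl]; exact hS
    have hT' : IsMinimalVertexCover G Tᶜ := by
      rw [minCover_iff_maxIndep_compl, compl_compl]; exact hT
    have := h Sᶜ Tᶜ hS' hT'
    have h1 := Finset.card_add_card_compl S
    have h2 := Finset.card_add_card_compl T
    omega
  · intro h C D hC hD
    have := h Cᶜ Dᶜ ((minCover_iff_maxIndep_compl G C).1 hC)
      ((minCover_iff_maxIndep_compl G D).1 hD)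
    have h1 := Finset.card_add_card_compl C
    have h2 := Finset.card_add_card_compl D
    omega

lemma exists_maxIndep_superset (G : SimpleGraph V) (A : Finset V)
    (hA : IsIndepSet G A) : ∃ S, A ⊆ S ∧ IsMaxIndepSet G S := by
  classical
  set SS := (Finset.univ : Finset (Finset V)).filter
    (fun T => A ⊆ T ∧ IsIndepSet G T) with hSS
  have hne : SS.Nonempty := ⟨A, by simp [hSS, hA]⟩
  obtain ⟨S, hS, hmax⟩ := SS.exists_max_image Finset.card hne
  simp only [hSS, Finset.mem_filter, Finset.mem_univ, true_and] at hS
  refine ⟨S, hS.1, hS.2, ?_⟩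
  intro T hT hTindep
  have hTmem : T ∈ SS := by
    simp only [hSS, Finset.mem_filter, Finset.mem_univ, true_and]
    exact ⟨hS.1.trans hT.subset, hTindep⟩
  have := hmax T hTmem
  have := Finset.card_lt_card hT
  omega

end Aux

theorem unmixed_iff_no_indep_transversal (n r : ℕ) (hn : 1 ≤ n) (hr : 2 ≤ r)
    (G : SimpleGraph (Fin n × Fin r))
    (hclique : ∀ (j : Fin n) (i i' : Fin r), i ≠ i' → G.Adj (j, i) (j, i'))
    (hpartite : ∀ (j j' : Fin n) (i : Fin r), ¬ G.Adj (j, i) (j', i)) :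
    Unmixed G ↔
      ∀ (q : Fin n) (k : Fin r → Fin n) (s : Fin r → Fin r),
        (∀ i : Fin r, G.Adj (k i, s i) (q, i)) →
        ¬ IsIndepSet G (Finset.univ.image (fun i : Fin r => (k i, s i))) := by

  classical
  -- a column is a maximal independent set of size n
  have i0 : Fin r := ⟨0, by omega⟩
  set S0 : Finset (Fin n × Fin r) := Finset.univ.image (fun j : Fin n => (j, i0))
    with hS0def
  have hS0mem : ∀ v : Fin n × Fin r, v ∈ S0 ↔ v.2 = i0 := by
    rintro ⟨j, i⟩
    simp only [hS0def, Finset.mem_image, Finset.mem_univ, true_and, Prod.mk.injEq]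
    constructor
    · rintro ⟨a, rfl, rfl⟩; rfl
    · rintro rfl; exact ⟨j, rfl, rfl⟩
  have hS0indep : IsIndepSet G S0 := by
    intro v hv w hw hvw
    have h12 : v.2 = w.2 := ((hS0mem v).1 hv).trans ((hS0mem w).1 hw).symm
    have hw' : ((w.1, v.2) : Fin n × Fin r) = w := by rw [h12]
    have hadj : G.Adj (v.1, v.2) (w.1, v.2) := by rw [hw']; exact hvw
    exact hpartite v.1 w.1 v.2 hadj
  have hS0max : IsMaxIndepSet G S0 := by
    refine ⟨hS0indep, ?_⟩
    intro T hT hTindep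
    obtain ⟨v, hvT, hvS0⟩ := Finset.exists_of_ssubset hT
    obtain ⟨j, i⟩ := v
    have hi : i ≠ i0 := fun h => hvS0 ((hS0mem _).2 h)
    have hji0 : ((j, i0) : Fin n × Fin r) ∈ T := hT.subset ((hS0mem _).2 rfl)
    exact hTindep _ hvT _ hji0 (hclique j i i0 hi)
  have hS0card : S0.card = n := by
    rw [hS0def, Finset.card_image_of_injective _
      (fun a b h => congrArg Prod.fst h)]
    simp
  -- independent sets have at most one vertex per row
  have hinj : ∀ S : Finset (Fin n × Fin r), IsIndepSet G S →
      Set.InjOn Prod.fst (S : Set (Fin n × Fin r)) := by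
    intro S hS v hv w hw h
    by_contra hne
    have h2 : v.2 ≠ w.2 := fun h2 => hne (Prod.ext h h2)
    have hadj : G.Adj v w := by
      have hw' : w = (v.1, w.2) := Prod.ext h.symm rfl
      rw [hw']
      exact hclique v.1 v.2 w.2 h2
    exact hS v (Finset.mem_coe.1 hv) w (Finset.mem_coe.1 hw) hadj
  constructor
  · -- unmixed → no independent transversal
    intro hU q k s hadj hindep
    have hW := (unmixed_iff_wellCovered G).1 hU
    obtain ⟨S, hAS, hSmax⟩ := exists_maxIndep_superset G _ hindep
    have hqS : ∀ i : Fin r, ((q, i) : Fin n × Fin r) ∉ S := by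
      intro i hqi
      have hki : ((k i, s i) : Fin n × Fin r) ∈ S :=
        hAS (Finset.mem_image.2 ⟨i, Finset.mem_univ i, rfl⟩)
      exact hSmax.1 _ hki _ hqi (hadj i)
    have hcard : S.card < n := by
      have hinjS := hinj S hSmax.1
      have h1 : S.card = (S.image Prod.fst).card :=
        (Finset.card_image_of_injOn hinjS).symm
      have h2 : q ∉ S.image Prod.fst := by
        intro hq
        obtain ⟨v, hvS, hv1⟩ := Finset.mem_image.1 hq
        have : v = (q, v.2) := Prod.ext hv1 rfl
        rw [this] at hvS
        exact hqS v.2 hvS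
      have h3 : S.image Prod.fst ⊂ Finset.univ :=
        (Finset.ssubset_univ_iff).2 (fun h => h2 (h ▸ Finset.mem_univ q))
      have := Finset.card_lt_card h3
      simpa [h1] using this
    have := hW S S0 hSmax hS0max
    omega
  · -- no independent transversal → unmixed
    intro hRHS
    rw [unmixed_iff_wellCovered]
    have hkey : ∀ S : Finset (Fin n × Fin r), IsMaxIndepSet G S → S.card = n := by
      intro S hSmax
      have hhit : ∀ q : Fin n, ∃ i : Fin r, ((q, i) : Fin n × Fin r) ∈ S := by
        intro q
        by_contra hq
        push_neg at hq
        have hex : ∀ i : Fin r, ∃ u ∈ S, G.Adj u (q, i) := by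
          intro i
          have hni : ¬ IsIndepSet G (insert ((q, i) : Fin n × Fin r) S) :=
            hSmax.2 _ (Finset.ssubset_insert (hq i))
          simp only [IsIndepSet] at hni
          push_neg at hni
          obtain ⟨v, hv, w, hw, hvw⟩ := hni
          rcases Finset.mem_insert.1 hv with rfl | hvS
          · rcases Finset.mem_insert.1 hw with rfl | hwS
            · exact absurd hvw (G.irrefl)
            · exact ⟨w, hwS, hvw.symm⟩
          · rcases Finset.mem_insert.1 hw with rfl | hwS
            · exact ⟨v, hvS, hvw⟩
            · exact absurd hvw (hSmax.1 v hvS w hwS)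
        choose u huS huadj using hex
        have hadj' : ∀ i : Fin r, G.Adj ((u i).1, (u i).2) (q, i) := by
          intro i; rw [Prod.mk.eta]; exact huadj i
        refine hRHS q (fun i => (u i).1) (fun i => (u i).2) hadj' ?_
        intro v hv w hw
        obtain ⟨iv, _, hiv⟩ := Finset.mem_image.1 hv
        obtain ⟨iw, _, hiw⟩ := Finset.mem_image.1 hw
        have hvS : v ∈ S := by rw [← hiv, Prod.mk.eta]; exact huS iv
        have hwS : w ∈ S := by rw [← hiw, Prod.mk.eta]; exact huS iw
        exact hSmax.1 v hvS w hwS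
      have hinjS := hinj S hSmax.1
      have h1 : S.card = (S.image Prod.fst).card :=
        (Finset.card_image_of_injOn hinjS).symm
      have h2 : S.image Prod.fst = Finset.univ := by
        apply Finset.eq_univ_of_forall
        intro q
        obtain ⟨i, hi⟩ := hhit q
        exact Finset.mem_image.2 ⟨(q, i), hi, rfl⟩
      rw [h1, h2]
      simp
    intro S T hS hT
    rw [hkey S hS, hkey T hT]
end

section
/- Let G be an r-partite graph with parts V_i = {x_{1i}, ..., x_{ni}} where each row {x_{j1}, ..., x_{jr}} is a clique, and suppose G is unmixed. Then every minimal vertex cover of G intersects each row {x_{q1}, ..., x_{qr}} in exactly r-1 vertices. -/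
open Finset

variable {V : Type*}

/-- Any vertex cover meets each row (a clique of size `r`) in at least `r - 1` vertices. -/
lemma cover_row_lower_bound {n r : ℕ}
    (G : SimpleGraph (Fin n × Fin r))
    (hclique : ∀ (j : Fin n) (i i' : Fin r), i ≠ i' → G.Adj (j, i) (j, i'))
    (C : Finset (Fin n × Fin r)) (hC : IsVertexCover G C) (q : Fin n) :
    r - 1 ≤ (C ∩ Finset.univ.image (fun i : Fin r => (q, i))).card := by
  by_contra h
  push_neg at h
  set row := Finset.univ.image (fun i : Fin r => (q, i)) with hrowdef
  have hinj : Function.Injective (fun i : Fin r => (q, i)) := by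
    intro a b hab; simpa using hab
  have hcard : row.card = r := by
    rw [hrowdef, Finset.card_image_of_injective _ hinj, Finset.card_univ, Fintype.card_fin]
  have hsd : (row \ C).card + (row ∩ C).card = row.card :=
    Finset.card_sdiff_add_card_inter row C
  have hic : (row ∩ C).card = (C ∩ row).card := by rw [Finset.inter_comm]
  have h2 : 1 < (row \ C).card := by omega
  obtain ⟨a, ha, b, hb, hab⟩ := Finset.one_lt_card.mp h2
  obtain ⟨ha1, ha2⟩ := Finset.mem_sdiff.mp ha
  obtain ⟨hb1, hb2⟩ := Finset.mem_sdiff.mp hb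
  obtain ⟨i, _, hi⟩ := Finset.mem_image.mp ha1
  obtain ⟨i', _, hi'⟩ := Finset.mem_image.mp hb1
  subst hi; subst hi'
  have hii' : i ≠ i' := by rintro rfl; exact hab rfl
  rcases hC _ _ (hclique q i i' hii') with h' | h'
  · exact ha2 h'
  · exact hb2 h'

theorem minimalVertexCover_inter_row (n r : ℕ) (hn : 1 ≤ n) (hr : 2 ≤ r)
    (G : SimpleGraph (Fin n × Fin r))
    (hclique : ∀ (j : Fin n) (i i' : Fin r), i ≠ i' → G.Adj (j, i) (j, i'))
    (hpartite : ∀ (j j' : Fin n) (i : Fin r), ¬ G.Adj (j, i) (j', i))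
    (hunmixed : Unmixed G) :
    ∀ C : Finset (Fin n × Fin r), IsMinimalVertexCover G C →
      ∀ q : Fin n,
        (C ∩ Finset.univ.image (fun i : Fin r => (q, i))).card = r - 1 := by
  intro C hC q0
  set z : Fin r := ⟨0, by omega⟩ with hz
  set col : Finset (Fin n × Fin r) := Finset.univ.image (fun j : Fin n => (j, z)) with hcol
  set D : Finset (Fin n × Fin r) := Finset.univ \ col with hD
  have hmemcol : ∀ x : Fin n × Fin r, x ∈ col ↔ x.2 = z := by
    intro x
    simp only [hcol, Finset.mem_image, Finset.mem_univ, true_and]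
    constructor
    · rintro ⟨j, hj⟩; rw [← hj]
    · intro hx; exact ⟨x.1, by rw [← hx]⟩
  have hmemD : ∀ x : Fin n × Fin r, x ∈ D ↔ x.2 ≠ z := by
    intro x; simp [hD, hmemcol]
  -- D is a vertex cover
  have hDcover : IsVertexCover G D := by
    intro v w hadj
    by_contra hcon
    push_neg at hcon
    obtain ⟨hv, hw⟩ := hcon
    have hv2 : v.2 = z := by by_contra h; exact hv ((hmemD v).mpr h)
    have hw2 : w.2 = z := by by_contra h; exact hw ((hmemD w).mpr h)
    have hv' : v = (v.1, z) := by rw [← hv2]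
    have hw' : w = (w.1, z) := by rw [← hw2]
    rw [hv', hw'] at hadj
    exact hpartite v.1 w.1 z hadj
  -- D is minimal
  have hDmin : IsMinimalVertexCover G D := by
    refine ⟨hDcover, ?_⟩
    intro E hE hEcover
    obtain ⟨x, hxD, hxE⟩ := Finset.exists_of_ssubset hE
    have hx2 : x.2 ≠ z := (hmemD x).mp hxD
    have hadj : G.Adj (x.1, x.2) (x.1, z) := hclique x.1 x.2 z hx2
    rcases hEcover _ _ hadj with h' | h'
    · exact hxE h'
    · have : (x.1, z) ∈ D := hE.subset h'
      exact ((hmemD _).mp this) rfl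
  -- card of D
  have hcolcard : col.card = n := by
    rw [hcol, Finset.card_image_of_injective _ (fun a b hab => by simpa using hab),
      Finset.card_univ, Fintype.card_fin]
  have hDcard : D.card = n * r - n := by
    rw [hD, Finset.card_sdiff_of_subset (Finset.subset_univ col), hcolcard, Finset.card_univ]
    simp [Fintype.card_prod]
  have hCcard : C.card = n * r - n := by
    rw [hunmixed C D hC hDmin, hDcard]
  -- fiberwise sum
  set f : Fin n → ℕ := fun q => (C ∩ Finset.univ.image (fun i : Fin r => (q, i))).card with hf
  have hfiber : ∀ q : Fin n,
      C.filter (fun x => x.1 = q) = C ∩ Finset.univ.image (fun i : Fin r => (q, i)) := by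
    intro q
    ext x
    simp only [Finset.mem_filter, Finset.mem_inter, Finset.mem_image, Finset.mem_univ, true_and]
    constructor
    · rintro ⟨hx, hx1⟩; exact ⟨hx, x.2, by rw [← hx1]⟩
    · rintro ⟨hx, i, hi⟩; exact ⟨hx, by rw [← hi]⟩
  have hsum : ∑ q : Fin n, f q = C.card := by
    rw [Finset.card_eq_sum_card_fiberwise (f := Prod.fst) (t := Finset.univ)
      (fun x _ => Finset.mem_univ x.1)]
    exact Finset.sum_congr rfl (fun q _ => by rw [hfiber q])
  have hlb : ∀ q : Fin n, r - 1 ≤ f q :=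
    fun q => cover_row_lower_bound G hclique C hC.1 q
  have hsumval : ∑ q : Fin n, f q = n * (r - 1) := by
    rw [hsum, hCcard, Nat.mul_sub, Nat.mul_one]
  by_contra hne
  have hgt : r - 1 < f q0 := lt_of_le_of_ne (hlb q0) (Ne.symm hne)
  have : ∑ _q : Fin n, (r - 1) < ∑ q : Fin n, f q :=
    Finset.sum_lt_sum (fun q _ => hlb q) ⟨q0, Finset.mem_univ q0, hgt⟩
  rw [Finset.sum_const, Finset.card_univ, Fintype.card_fin, smul_eq_mul, hsumval] at this
  exact lt_irrefl _ this
end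

section
/- Let G be a bipartite graph without isolated vertices with bipartition V_1 = {x_1, ..., x_g}, V_2 = {y_1, ..., y_g} satisfying: (a) {x_i, y_i} ∈ E(G) for all i, and (b) if {x_i, y_j} ∈ E(G) and {x_j, y_k} ∈ E(G) with i, j, k distinct, then {x_i, y_k} ∈ E(G). Then G is unmixed. -/
open Finset

variable {V : Type*}

theorem villarreal_sufficiency (g : ℕ)
    (G : SimpleGraph (Fin g ⊕ Fin g))
    (hbip₁ : ∀ i j : Fin g, ¬ G.Adj (Sum.inl i) (Sum.inl j))
    (hbip₂ : ∀ i j : Fin g, ¬ G.Adj (Sum.inr i) (Sum.inr j))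
    (hniso : ∀ v, ∃ w, G.Adj v w)
    (ha : ∀ i : Fin g, G.Adj (Sum.inl i) (Sum.inr i))
    (hb : ∀ i j k : Fin g, i ≠ j → j ≠ k → i ≠ k →
      G.Adj (Sum.inl i) (Sum.inr j) → G.Adj (Sum.inl j) (Sum.inr k) →
      G.Adj (Sum.inl i) (Sum.inr k)) :
    Unmixed G := by
  -- Key: a minimal cover never contains both x_j and y_j
  have key : ∀ C : Finset (Fin g ⊕ Fin g), IsMinimalVertexCover G C →
      ∀ j : Fin g, Sum.inl j ∈ C → Sum.inr j ∈ C → False := by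
    intro C hC j hl hr
    obtain ⟨hcov, hmin⟩ := hC
    -- erase x_j is not a cover: get an edge x_j -- y_k with y_k ∉ C, k ≠ j
    have h1 := hmin (C.erase (Sum.inl j)) (Finset.erase_ssubset hl)
    have h2 := hmin (C.erase (Sum.inr j)) (Finset.erase_ssubset hr)
    simp only [IsVertexCover, not_forall] at h1 h2
    obtain ⟨v, w, hvw, hnd⟩ := h1
    push_neg at hnd
    obtain ⟨hv, hw⟩ := hnd
    -- one of v, w is x_j, the other is some y_k ∉ C
    have hedge1 : ∃ k : Fin g, k ≠ j ∧ G.Adj (Sum.inl j) (Sum.inr k) ∧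
        Sum.inr k ∉ C := by
      rcases hcov v w hvw with hvc | hwc
      · have hvj : v = Sum.inl j := by
          by_contra h
          exact hv (Finset.mem_erase.2 ⟨h, hvc⟩)
        subst hvj
        obtain ⟨k, rfl⟩ : ∃ k, w = Sum.inr k := by
          cases w with
          | inl k => exact absurd hvw (hbip₁ j k)
          | inr k => exact ⟨k, rfl⟩
        have hwC : Sum.inr k ∉ C := fun h =>
          hw (Finset.mem_erase.2 ⟨by simp, h⟩)
        exact ⟨k, fun h => hwC (h ▸ hr), hvw, hwC⟩
      · have hwj : w = Sum.inl j := by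
          by_contra h
          exact hw (Finset.mem_erase.2 ⟨h, hwc⟩)
        subst hwj
        obtain ⟨k, rfl⟩ : ∃ k, v = Sum.inr k := by
          cases v with
          | inl k => exact absurd hvw.symm (hbip₁ j k)
          | inr k => exact ⟨k, rfl⟩
        have hvC : Sum.inr k ∉ C := fun h =>
          hv (Finset.mem_erase.2 ⟨by simp, h⟩)
        exact ⟨k, fun h => hvC (h ▸ hr), hvw.symm, hvC⟩
    obtain ⟨v, w, hvw, hnd⟩ := h2
    push_neg at hnd
    obtain ⟨hv, hw⟩ := hnd
    have hedge2 : ∃ i : Fin g, i ≠ j ∧ G.Adj (Sum.inl i) (Sum.inr j) ∧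
        Sum.inl i ∉ C := by
      rcases hcov v w hvw with hvc | hwc
      · have hvj : v = Sum.inr j := by
          by_contra h
          exact hv (Finset.mem_erase.2 ⟨h, hvc⟩)
        subst hvj
        obtain ⟨i, rfl⟩ : ∃ i, w = Sum.inl i := by
          cases w with
          | inl i => exact ⟨i, rfl⟩
          | inr i => exact absurd hvw (hbip₂ j i)
        have hwC : Sum.inl i ∉ C := fun h =>
          hw (Finset.mem_erase.2 ⟨by simp, h⟩)
        exact ⟨i, fun h => hwC (h ▸ hl), hvw.symm, hwC⟩
      · have hwj : w = Sum.inr j := by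
          by_contra h
          exact hw (Finset.mem_erase.2 ⟨h, hwc⟩)
        subst hwj
        obtain ⟨i, rfl⟩ : ∃ i, v = Sum.inl i := by
          cases v with
          | inl i => exact ⟨i, rfl⟩
          | inr i => exact absurd hvw.symm (hbip₂ j i)
        have hvC : Sum.inl i ∉ C := fun h =>
          hv (Finset.mem_erase.2 ⟨by simp, h⟩)
        exact ⟨i, fun h => hvC (h ▸ hl), hvw, hvC⟩
    obtain ⟨k, hkj, hadjk, hkC⟩ := hedge1
    obtain ⟨i, hij, hadji, hiC⟩ := hedge2
    by_cases hik : i = k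
    · subst hik
      rcases hcov (Sum.inl i) (Sum.inr i) (ha i) with h | h
      · exact hiC h
      · exact hkC h
    · have := hb i j k hij (fun h => hkj h.symm) hik hadji hadjk
      rcases hcov (Sum.inl i) (Sum.inr k) this with h | h
      · exact hiC h
      · exact hkC h
  -- Every minimal cover has cardinality g
  have card_eq : ∀ C : Finset (Fin g ⊕ Fin g), IsMinimalVertexCover G C →
      C.card = g := by
    intro C hC
    have hcov := hC.1
    have : C.card = (Finset.univ : Finset (Fin g)).card := by
      apply Finset.card_bij (fun a _ => Sum.elim id id a)
      · intro a _; exact Finset.mem_univ _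
      · intro a ha' b hb' hab
        cases a with
        | inl i =>
          cases b with
          | inl i' => simpa using hab
          | inr i' =>
            simp only [Sum.elim_inl, Sum.elim_inr, id] at hab
            subst hab
            exact absurd (key C hC i ha' hb') id
        | inr i =>
          cases b with
          | inl i' =>
            simp only [Sum.elim_inl, Sum.elim_inr, id] at hab
            subst hab
            exact absurd (key C hC i hb' ha') id
          | inr i' => simpa using hab
      · intro i _
        rcases hcov (Sum.inl i) (Sum.inr i) (ha i) with h | h
        · exact ⟨Sum.inl i, h, rfl⟩
        · exact ⟨Sum.inr i, h, rfl⟩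
    simpa using this
  intro C D hC hD
  rw [card_eq C hC, card_eq D hD]
end

section
/- Let G be an unmixed bipartite graph without isolated vertices. Then there is a labeling of a bipartition V_1 = {x_1, ..., x_g}, V_2 = {y_1, ..., y_g} of G such that {x_i, y_i} ∈ E(G) for all i, and whenever {x_i, y_j}, {x_j, y_k} ∈ E(G) with i, j, k distinct, also {x_i, y_k} ∈ E(G). -/
open Finset

variable {V : Type*}

section Helpers

variable [Fintype V] [DecidableEq V] {G : SimpleGraph V}

lemma cover_contains_minimal (C : Finset V) (hC : IsVertexCover G C) :
    ∃ M ⊆ C, IsMinimalVertexCover G M := by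
  induction C using Finset.strongInductionOn with
  | _ C ih =>
    by_cases h : ∃ D, D ⊂ C ∧ IsVertexCover G D
    · obtain ⟨D, hD, hDc⟩ := h
      obtain ⟨M, hM1, hM2⟩ := ih D hD hDc
      exact ⟨M, hM1.trans hD.subset, hM2⟩
    · push_neg at h
      exact ⟨C, Finset.Subset.refl C, hC, fun D hD hDc => h D hD hDc⟩

lemma exists_maximal_indep (S : Finset V) (hS : IsIndepSet G S) :
    ∃ M, S ⊆ M ∧ IsIndepSet G M ∧ ∀ v ∉ M, ¬ IsIndepSet G (insert v M) := by
  classical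
  obtain ⟨M, hM, hmax⟩ := Finset.exists_max_image
    (Finset.univ.powerset.filter fun T => S ⊆ T ∧ IsIndepSet G T) Finset.card
    ⟨S, by simp [hS]⟩
  simp only [Finset.mem_filter] at hM
  refine ⟨M, hM.2.1, hM.2.2, fun v hv hind => ?_⟩
  have h2 := hmax (insert v M) (by
    simp only [Finset.mem_filter, Finset.mem_powerset]
    exact ⟨Finset.subset_univ _, hM.2.1.trans (Finset.subset_insert _ _), hind⟩)
  rw [Finset.card_insert_of_notMem hv] at h2
  omega

lemma compl_maxIndep_minCover (M : Finset V) (hM : IsIndepSet G M)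
    (hmax : ∀ v ∉ M, ¬ IsIndepSet G (insert v M)) :
    IsMinimalVertexCover G (Finset.univ \ M) := by
  constructor
  · intro v w hadj
    by_contra hc
    push_neg at hc
    simp only [Finset.mem_sdiff, Finset.mem_univ, true_and, not_not] at hc
    exact hM v hc.1 w hc.2 hadj
  · intro D hD hDc
    obtain ⟨v, hvC, hvD⟩ := Finset.exists_of_ssubset hD
    simp only [Finset.mem_sdiff, Finset.mem_univ, true_and] at hvC
    have hnind := hmax v hvC
    rw [IsIndepSet] at hnind
    push_neg at hnind
    obtain ⟨a, ha, b, hb, hab⟩ := hnind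
    simp only [Finset.mem_insert] at ha hb
    have key : ∃ w ∈ M, G.Adj v w := by
      rcases ha with rfl | ha
      · rcases hb with rfl | hb
        · exact absurd hab (G.irrefl)
        · exact ⟨b, hb, hab⟩
      · rcases hb with rfl | hb
        · exact ⟨a, ha, hab.symm⟩
        · exact absurd hab (hM a ha b hb)
    obtain ⟨w, hwM, hvw⟩ := key
    rcases hDc v w hvw with h | h
    · exact hvD h
    · have := hD.subset h
      simp [hwM] at this

end Helpers

theorem villarreal_necessity [Fintype V] [DecidableEq V] (G : SimpleGraph V)
    (hbip : ∃ A : Set V, ∀ v w, G.Adj v w → (v ∈ A ↔ w ∉ A))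
    (hniso : ∀ v, ∃ w, G.Adj v w)
    (hunmixed : Unmixed G) :
    ∃ (g : ℕ) (e : V ≃ (Fin g ⊕ Fin g)),
      (∀ i j : Fin g, ¬ G.Adj (e.symm (Sum.inl i)) (e.symm (Sum.inl j))) ∧
      (∀ i j : Fin g, ¬ G.Adj (e.symm (Sum.inr i)) (e.symm (Sum.inr j))) ∧
      (∀ i : Fin g, G.Adj (e.symm (Sum.inl i)) (e.symm (Sum.inr i))) ∧
      (∀ i j k : Fin g, i ≠ j → j ≠ k → i ≠ k →
        G.Adj (e.symm (Sum.inl i)) (e.symm (Sum.inr j)) →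
        G.Adj (e.symm (Sum.inl j)) (e.symm (Sum.inr k)) →
        G.Adj (e.symm (Sum.inl i)) (e.symm (Sum.inr k))) := by
  classical
  obtain ⟨A, hA⟩ := hbip
  set X : Finset V := Finset.univ.filter (fun v => v ∈ A) with hXdef
  set Y : Finset V := Finset.univ.filter (fun v => v ∉ A) with hYdef
  have hXmem : ∀ v, v ∈ X ↔ v ∈ A := by intro v; simp [hXdef]
  have hYmem : ∀ v, v ∈ Y ↔ v ∉ A := by intro v; simp [hYdef]
  -- X and Y are minimal vertex covers
  have hXcov : IsVertexCover G X := by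
    intro v w hadj
    by_cases h : v ∈ A
    · exact Or.inl ((hXmem v).2 h)
    · refine Or.inr ((hXmem w).2 ?_)
      by_contra hw
      exact h ((hA v w hadj).2 hw)
  have hYcov : IsVertexCover G Y := by
    intro v w hadj
    by_cases h : v ∈ A
    · exact Or.inr ((hYmem w).2 ((hA v w hadj).1 h))
    · exact Or.inl ((hYmem v).2 h)
  have hXmin : IsMinimalVertexCover G X := by
    refine ⟨hXcov, fun D hD hDc => ?_⟩
    obtain ⟨v, hvX, hvD⟩ := Finset.exists_of_ssubset hD
    obtain ⟨w, hw⟩ := hniso v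
    have hwA : w ∉ A := (hA v w hw).1 ((hXmem v).1 hvX)
    rcases hDc v w hw with h | h
    · exact hvD h
    · exact hwA ((hXmem w).1 (hD.subset h))
  have hYmin : IsMinimalVertexCover G Y := by
    refine ⟨hYcov, fun D hD hDc => ?_⟩
    obtain ⟨v, hvY, hvD⟩ := Finset.exists_of_ssubset hD
    obtain ⟨w, hw⟩ := hniso v
    have hwA : w ∈ A := by
      by_contra hc
      exact (hYmem v).1 hvY ((hA v w hw).2 hc)
    rcases hDc v w hw with h | h
    · exact hvD h
    · exact (hYmem w).1 (hD.subset h) hwA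
  have hcard : ∀ M, IsMinimalVertexCover G M → M.card = X.card :=
    fun M hM => hunmixed M X hM hXmin
  have hYX : Y.card = X.card := hcard Y hYmin
  -- Hall's condition and matching
  have hall : ∀ s : Finset {v : V // v ∈ A},
      s.card ≤ (s.biUnion fun x => G.neighborFinset x.val).card := by
    intro s
    set s' : Finset V := s.image Subtype.val with hs'def
    set N : Finset V := s.biUnion (fun x => G.neighborFinset x.val) with hNdef
    have hs'card : s'.card = s.card := Finset.card_image_of_injective _ Subtype.val_injective
    have hs'X : s' ⊆ X := by
      intro v hv
      simp only [hs'def, Finset.mem_image] at hv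
      obtain ⟨x, _, rfl⟩ := hv
      exact (hXmem _).2 x.prop
    have hCcov : IsVertexCover G ((X \ s') ∪ N) := by
      intro v w hadj
      by_cases hvA : v ∈ A
      · by_cases hvs : v ∈ s'
        · refine Or.inr (Finset.mem_union_right _ ?_)
          simp only [hs'def, Finset.mem_image] at hvs
          obtain ⟨x, hx, rfl⟩ := hvs
          exact Finset.mem_biUnion.2 ⟨x, hx, (G.mem_neighborFinset _ _).2 hadj⟩
        · exact Or.inl (Finset.mem_union_left _
            (Finset.mem_sdiff.2 ⟨(hXmem v).2 hvA, hvs⟩))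
      · have hwA : w ∈ A := by
          by_contra hc
          exact hvA ((hA v w hadj).2 hc)
        by_cases hws : w ∈ s'
        · refine Or.inl (Finset.mem_union_right _ ?_)
          simp only [hs'def, Finset.mem_image] at hws
          obtain ⟨x, hx, rfl⟩ := hws
          exact Finset.mem_biUnion.2 ⟨x, hx, (G.mem_neighborFinset _ _).2 hadj.symm⟩
        · exact Or.inr (Finset.mem_union_left _
            (Finset.mem_sdiff.2 ⟨(hXmem w).2 hwA, hws⟩))
    obtain ⟨M, hMC, hMmin⟩ := cover_contains_minimal _ hCcov
    have h1 : M.card = X.card := hcard M hMmin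
    have h2 : M.card ≤ ((X \ s') ∪ N).card := Finset.card_le_card hMC
    have h3 : ((X \ s') ∪ N).card ≤ (X \ s').card + N.card := Finset.card_union_le _ _
    have h4 : (X \ s').card = X.card - s'.card := Finset.card_sdiff_of_subset hs'X
    have h5 : s'.card ≤ X.card := Finset.card_le_card hs'X
    omega
  obtain ⟨f, hfinj, hf⟩ := (Finset.all_card_le_biUnion_card_iff_exists_injective _).1 hall
  have hfadj : ∀ x : {v : V // v ∈ A}, G.Adj x.val (f x) := by
    intro x
    exact (G.mem_neighborFinset _ _).1 (hf x)
  have hfY : ∀ x : {v : V // v ∈ A}, f x ∉ A := fun x => (hA _ _ (hfadj x)).1 x.prop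
  set g : ℕ := Fintype.card {v : V // v ∈ A} with hgdef
  have hXg : X.card = g := by
    rw [hgdef, Fintype.card_subtype]
  have hYg : Y.card = g := by rw [hYX, hXg]
  have hYcardsub : Fintype.card {v : V // v ∉ A} = g := by
    rw [Fintype.card_subtype, ← hYg]
  set f₂ : {v : V // v ∈ A} → {v : V // v ∉ A} := fun x => ⟨f x, hfY x⟩ with hf₂def
  have hf₂inj : Function.Injective f₂ := by
    intro a b h
    apply hfinj
    simpa [hf₂def, Subtype.ext_iff] using h
  have hf₂bij : Function.Bijective f₂ :=
    (Fintype.bijective_iff_injective_and_card f₂).2 ⟨hf₂inj, by rw [hYcardsub]⟩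
  set e₁ : {v : V // v ∈ A} ≃ {v : V // v ∉ A} := Equiv.ofBijective f₂ hf₂bij with he₁def
  set eX : {v : V // v ∈ A} ≃ Fin g := Fintype.equivFinOfCardEq rfl with heXdef
  set eY : {v : V // v ∉ A} ≃ Fin g := e₁.symm.trans eX with heYdef
  set e : V ≃ Fin g ⊕ Fin g :=
    (Equiv.sumCompl (fun v => v ∈ A)).symm.trans (Equiv.sumCongr eX eY) with hedef
  have hl : ∀ i : Fin g, e.symm (Sum.inl i) = ((eX.symm i : {v : V // v ∈ A}) : V) := by
    intro i; simp [hedef]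
  have hr : ∀ i : Fin g, e.symm (Sum.inr i) = ((eY.symm i : {v : V // v ∉ A}) : V) := by
    intro i; simp [hedef]
  have hlA : ∀ i : Fin g, e.symm (Sum.inl i) ∈ A := by
    intro i; rw [hl]; exact (eX.symm i).prop
  have hrA : ∀ i : Fin g, e.symm (Sum.inr i) ∉ A := by
    intro i; rw [hr]; exact (eY.symm i).prop
  have hmatch : ∀ i : Fin g, G.Adj (e.symm (Sum.inl i)) (e.symm (Sum.inr i)) := by
    intro i
    rw [hl, hr]
    have : eY.symm i = e₁ (eX.symm i) := by
      simp [heYdef]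
    rw [this]
    have : ((e₁ (eX.symm i) : {v : V // v ∉ A}) : V) = f (eX.symm i) := by
      simp [he₁def, Equiv.ofBijective, hf₂def]
    rw [this]
    exact hfadj (eX.symm i)
  refine ⟨g, e, ?_, ?_, hmatch, ?_⟩
  · intro i j hadj
    exact (hA _ _ hadj).1 (hlA i) ((hlA j))
  · intro i j hadj
    exact hrA j (by
      by_contra hc
      exact hrA i ((hA _ _ hadj).2 hc))
  · -- main combinatorial condition
    intro i j k hij hjk hik h1 h2
    by_contra hc
    -- the two-element set {x_i, y_k} is independent
    have hS : IsIndepSet G ({e.symm (Sum.inl i), e.symm (Sum.inr k)} : Finset V) := by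
      intro v hv w hw hadj
      simp only [Finset.mem_insert, Finset.mem_singleton] at hv hw
      rcases hv with rfl | rfl <;> rcases hw with rfl | rfl
      · exact G.irrefl hadj
      · exact hc hadj
      · exact hc hadj.symm
      · exact G.irrefl hadj
    obtain ⟨M, hSM, hMind, hMmax⟩ := exists_maximal_indep _ hS
    have hcompl := compl_maxIndep_minCover M hMind hMmax
    have hMcompl : (Finset.univ \ M).card = g := by rw [hcard _ hcompl, hXg]
    have hVcard : Fintype.card V = g + g := by
      rw [Fintype.card_congr e]
      simp [Fintype.card_sum]
    have hMcard : M.card = g := by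
      have h := Finset.card_sdiff_of_subset (Finset.subset_univ M)
      rw [Finset.card_univ, hVcard] at h
      have h2 := Finset.card_le_univ M
      rw [hVcard] at h2
      omega
    -- M picks exactly one vertex from each matched pair
    set π : V → Fin g := fun v => Sum.elim id id (e v) with hπdef
    have hπinj : Set.InjOn π M := by
      intro v hv w hw hvw
      by_contra hne
      have hne' : e v ≠ e w := fun h => hne (e.injective h)
      have hmem : ∀ a : Fin g, ∀ u, e u = Sum.inl a → u = e.symm (Sum.inl a) := by
        intro a u hu; rw [← hu]; simp
      have hmem' : ∀ a : Fin g, ∀ u, e u = Sum.inr a → u = e.symm (Sum.inr a) := by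
        intro a u hu; rw [← hu]; simp
      rcases hev : e v with a | a <;> rcases hew : e w with b | b
      · have : a = b := by
          have h1 : π v = a := by rw [hπdef]; simp [hev]
          have h2 : π w = b := by rw [hπdef]; simp [hew]
          rw [h1, h2] at hvw; exact hvw
        subst this
        exact hne' (hev.trans hew.symm)
      · have : a = b := by
          have h1 : π v = a := by rw [hπdef]; simp [hev]
          have h2 : π w = b := by rw [hπdef]; simp [hew]
          rw [h1, h2] at hvw; exact hvw
        subst this
        have hv' := hmem a v hev
        have hw' := hmem' a w hew
        exact hMind v hv w hw (by rw [hv', hw']; exact hmatch a)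
      · have : a = b := by
          have h1 : π v = a := by rw [hπdef]; simp [hev]
          have h2 : π w = b := by rw [hπdef]; simp [hew]
          rw [h1, h2] at hvw; exact hvw
        subst this
        have hv' := hmem' a v hev
        have hw' := hmem a w hew
        exact hMind w hw v hv (by rw [hv', hw']; exact hmatch a)
      · have : a = b := by
          have h1 : π v = a := by rw [hπdef]; simp [hev]
          have h2 : π w = b := by rw [hπdef]; simp [hew]
          rw [h1, h2] at hvw; exact hvw
        subst this
        exact hne' (hev.trans hew.symm)
    have himg : M.image π = Finset.univ := by
      apply Finset.eq_univ_of_card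
      rw [Finset.card_image_of_injOn hπinj, hMcard, Fintype.card_fin]
    have hj : (j : Fin g) ∈ M.image π := by rw [himg]; exact Finset.mem_univ _
    obtain ⟨v, hvM, hvj⟩ := Finset.mem_image.1 hj
    have hxiM : e.symm (Sum.inl i) ∈ M := hSM (by simp)
    have hykM : e.symm (Sum.inr k) ∈ M := hSM (by simp)
    rcases hev : e v with a | a
    · have ha : a = j := by
        have : π v = a := by rw [hπdef]; simp [hev]
        rw [this] at hvj; exact hvj
      rw [ha] at hev
      have hv' : v = e.symm (Sum.inl j) := by rw [← hev]; simp
      exact hMind v hvM _ hykM (by rw [hv']; exact h2)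
    · have ha : a = j := by
        have : π v = a := by rw [hπdef]; simp [hev]
        rw [this] at hvj; exact hvj
      rw [ha] at hev
      have hv' : v = e.symm (Sum.inr j) := by rw [← hev]; simp
      exact hMind _ hxiM v hvM (by rw [hv']; exact h1)
end

section
/- Let G be an unmixed connected bipartite graph on 2n vertices (n ≥ 1). Then the independence number of G equals n, i.e., G is very well-covered. -/
open Finset

variable {V : Type*}

/-- Complement of a dominating independent set is a minimal vertex cover. -/
lemma compl_min_cover [Fintype V] [DecidableEq V] (G : SimpleGraph V)
    (T : Finset V) (hT : IsIndepSet G T)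
    (hdom : ∀ v ∉ T, ∃ w ∈ T, G.Adj v w) :
    IsMinimalVertexCover G Tᶜ := by
  constructor
  · intro v w hvw
    by_contra h
    push_neg at h
    obtain ⟨h1, h2⟩ := h
    simp only [Finset.mem_compl, not_not] at h1 h2
    exact hT v h1 w h2 hvw
  · intro D hD hDcov
    obtain ⟨x, hxT, hxD⟩ := Finset.exists_of_ssubset hD
    have hD1 : D ⊆ Tᶜ := hD.subset
    have hxnotT : x ∉ T := by simpa using hxT
    obtain ⟨w, hwT, hadj⟩ := hdom x hxnotT
    rcases hDcov x w hadj with h | h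
    · exact hxD h
    · have : w ∈ Tᶜ := hD1 h
      simp [hwT] at this

theorem very_wellCovered [Fintype V] [DecidableEq V] (G : SimpleGraph V)
    (n : ℕ) (hn : 1 ≤ n) (hcard : Fintype.card V = 2 * n)
    (hconn : G.Connected)
    (hbip : ∃ A : Set V, ∀ v w, G.Adj v w → (v ∈ A ↔ w ∉ A))
    (hunmixed : Unmixed G) :
    (∀ S : Finset V, IsIndepSet G S → S.card ≤ n) ∧
      (∃ S : Finset V, IsIndepSet G S ∧ S.card = n) := by
  classical
  obtain ⟨A, hA⟩ := hbip
  -- every vertex has a neighbor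
  have hnbr : ∀ v : V, ∃ w, G.Adj v w := by
    intro v
    have h2 : 1 < Fintype.card V := by omega
    obtain ⟨u, hu⟩ := Fintype.exists_ne_of_one_lt_card h2 v
    obtain ⟨p⟩ := hconn.preconnected v u
    cases p with
    | nil => exact absurd rfl hu.symm
    | cons h q => exact ⟨_, h⟩
  set Af : Finset V := Finset.univ.filter (· ∈ A) with hAf
  have hmemAf : ∀ v, v ∈ Af ↔ v ∈ A := by intro v; simp [hAf]
  have hmemAfc : ∀ v, v ∈ Afᶜ ↔ v ∉ A := by intro v; simp [hAf]
  -- Af is independent and dominating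
  have hAfind : IsIndepSet G Af := by
    intro v hv w hw hvw
    exact ((hA v w hvw).mp ((hmemAf v).mp hv)) ((hmemAf w).mp hw)
  have hAfdom : ∀ v ∉ Af, ∃ w ∈ Af, G.Adj v w := by
    intro v hv
    obtain ⟨w, hw⟩ := hnbr v
    refine ⟨w, ?_, hw⟩
    rw [hmemAf]
    by_contra hwA
    exact ((hmemAf v).not.mp hv) (((hA v w hw).mpr hwA))
  -- Afᶜ is independent and dominating
  have hAfcind : IsIndepSet G Afᶜ := by
    intro v hv w hw hvw
    exact ((hmemAfc v).mp hv) (((hA v w hvw).mpr ((hmemAfc w).mp hw)))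
  have hAfcdom : ∀ v ∉ Afᶜ, ∃ w ∈ Afᶜ, G.Adj v w := by
    intro v hv
    obtain ⟨w, hw⟩ := hnbr v
    refine ⟨w, ?_, hw⟩
    rw [hmemAfc]
    have hvA : v ∈ A := by
      by_contra h; exact hv ((hmemAfc v).mpr h)
    exact (hA v w hw).mp hvA
  have hC1 := compl_min_cover G Af hAfind hAfdom
  have hC2 := compl_min_cover G Afᶜ hAfcind hAfcdom
  rw [compl_compl] at hC2
  have hcard1 : Afᶜ.card = Af.card := hunmixed _ _ hC1 hC2
  have hcompl : Afᶜ.card = Fintype.card V - Af.card := Finset.card_compl Af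
  have hle : Af.card ≤ Fintype.card V := Finset.card_le_univ Af
  have hAn : Af.card = n := by omega
  constructor
  · intro S hS
    -- extend S to a maximum independent set containing it
    have hSmem : S ∈ Finset.univ.filter (fun T => IsIndepSet G T ∧ S ⊆ T) := by
      simp [hS]
    obtain ⟨T, hTmem, hTmax⟩ := Finset.exists_max_image _ Finset.card ⟨S, hSmem⟩
    simp only [Finset.mem_filter, Finset.mem_univ, true_and] at hTmem
    obtain ⟨hTind, hST⟩ := hTmem
    have hTdom : ∀ v ∉ T, ∃ w ∈ T, G.Adj v w := by
      intro v hv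
      by_contra h
      push_neg at h
      have hins : IsIndepSet G (insert v T) := by
        intro a ha b hb hab
        rcases Finset.mem_insert.mp ha with rfl | ha' <;>
          rcases Finset.mem_insert.mp hb with rfl | hb'
        · exact hab.ne rfl
        · exact h b hb' hab
        · exact h a ha' hab.symm
        · exact hTind a ha' b hb' hab
      have hmem : insert v T ∈ Finset.univ.filter
          (fun T => IsIndepSet G T ∧ S ⊆ T) := by
        simp only [Finset.mem_filter, Finset.mem_univ, true_and]
        exact ⟨hins, hST.trans (Finset.subset_insert v T)⟩
      have := hTmax _ hmem
      rw [Finset.card_insert_of_notMem hv] at this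
      omega
    have hTC := compl_min_cover G T hTind hTdom
    have hTc : Tᶜ.card = Af.card := hunmixed _ _ hTC hC2
    have hTcompl : Tᶜ.card = Fintype.card V - T.card := Finset.card_compl T
    have hTle : T.card ≤ Fintype.card V := Finset.card_le_univ T
    have hScard := Finset.card_le_card hST
    omega
  · exact ⟨Af, hAfind, hAn⟩
end
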